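/- arXiv:1510.05374 — 2 statements merged into one kernel-verified Lean document; each statement's English description precedes it below -/
import Mathlib

section
/- The element X := T_0 T_1 ⋯ T_n satisfies X T_i = T_{i+1} X for all 1 ≤ i ≤ n-2, and T_1 X² = X² T_{n-1}. -/
/-!
Write `Y k = T k ⋯ T n`, so that `X = T 0 * Y 1`. Splitting `X` around `T i T (i+1)`, the factor
`T i` commutes with everything to its right and `T (i+1)` with everything to its left, so the
braid relation in the middle moves `T i` through `X` as `T (i+1)`.

For the second relation, a downward induction on `k`, starting from the relation of `T (n-1)` and
`T n`, gives `T k * (Y (k+1) * Y k) = Y (k+1) * Y k * T (n-1)` for `1 ≤ k ≤ n-1`. Since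
`X² = T 0 T 1 T 0 * (Y 2 * T 1 * Y 2)` (as `T 0` commutes with `Y 2`), the relation of `T 0` and
`T 1` turns `T 1 X²` into `T 0 T 1 T 0 * T 1 (Y 2 * Y 1)`, and the case `k = 1` finishes.
-/

/-- The ordered product `T a * T (a+1) * ⋯ * T b` (equal to `1` when `b < a`). -/
def upProd {G : Type*} [Monoid G] (T : ℕ → G) (a b : ℕ) : G :=
  ((List.range (b + 1 - a)).map fun k => T (a + k)).prod

section upProd

variable {M : Type*} [Monoid M] (T : ℕ → M)

theorem upProd_of_lt {a b : ℕ} (h : b < a) : upProd T a b = 1 := by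
  simp [upProd, Nat.sub_eq_zero_of_le h]

theorem upProd_eq_mul {a b : ℕ} (h : a ≤ b) : upProd T a b = T a * upProd T (a + 1) b := by
  rw [upProd, upProd, show b + 1 - a = b + 1 - (a + 1) + 1 by omega, List.range_succ_eq_map]
  simp [Function.comp_def, add_assoc, add_comm 1]

theorem upProd_self (a : ℕ) : upProd T a a = T a := by
  rw [upProd_eq_mul T le_rfl, upProd_of_lt T (Nat.lt_succ_self a), mul_one]

variable {T}

theorem Commute.upProd_right {g : M} {a b : ℕ} (h : ∀ k, a ≤ k → k ≤ b → Commute g (T k)) :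
    Commute g (upProd T a b) := by
  refine Commute.list_prod_right _ _ fun x hx => ?_
  obtain ⟨k, hk, rfl⟩ := List.mem_map.mp hx
  have := List.mem_range.mp hk
  exact h _ (by omega) (by omega)

theorem upProd_mul_of_braid {a b i : ℕ} (hai : a ≤ i) (hib : i < b)
    (hbraid : T i * T (i + 1) * T i = T (i + 1) * T i * T (i + 1))
    (hleft : ∀ k, a ≤ k → k < i → Commute (T (i + 1)) (T k))
    (hright : ∀ k, i + 2 ≤ k → k ≤ b → Commute (T i) (T k)) :
    upProd T a b * T i = T (i + 1) * upProd T a b := by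
  induction hai using Nat.decreasingInduction with
  | self =>
    have hq : Commute (T i) (upProd T (i + 1 + 1) b) := Commute.upProd_right hright
    rw [upProd_eq_mul T hib.le, upProd_eq_mul T hib]
    calc T i * (T (i + 1) * upProd T (i + 1 + 1) b) * T i
        = T i * T (i + 1) * T i * upProd T (i + 1 + 1) b := by
          simp only [mul_assoc, hq.eq]
      _ = T (i + 1) * (T i * (T (i + 1) * upProd T (i + 1 + 1) b)) := by
          rw [hbraid]; simp only [mul_assoc]
  | of_succ k hk ih =>
    rw [upProd_eq_mul T (by omega), mul_assoc,
      ih fun l hl hli => hleft l (by omega) hli, ← mul_assoc,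
      ← (hleft k le_rfl hk).eq, mul_assoc]

theorem mul_upProd_succ_mul_upProd_of_braid {a b : ℕ} (hab : a ≤ b)
    (hbraid : ∀ i, a ≤ i → i < b → T i * T (i + 1) * T i = T (i + 1) * T i * T (i + 1))
    (hcomm : ∀ i j, a ≤ i → i + 2 ≤ j → j ≤ b + 1 → Commute (T i) (T j))
    (hend : T b * T (b + 1) * T b * T (b + 1) = T (b + 1) * T b * T (b + 1) * T b) :
    T a * (upProd T (a + 1) (b + 1) * upProd T a (b + 1)) =
      upProd T (a + 1) (b + 1) * upProd T a (b + 1) * T b := by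
  induction hab using Nat.decreasingInduction with
  | self =>
    rw [upProd_self, upProd_eq_mul T (Nat.le_succ b), upProd_self]
    simpa only [mul_assoc] using hend
  | of_succ k hk ih =>
    set Y₂ := upProd T (k + 2) (b + 1)
    have hY₁ : upProd T (k + 1) (b + 1) = T (k + 1) * Y₂ := upProd_eq_mul T (by omega)
    have hY₀ : upProd T k (b + 1) = T k * upProd T (k + 1) (b + 1) := upProd_eq_mul T (by omega)
    have hY₂ : Commute (T k) Y₂ :=
      Commute.upProd_right fun j hj hjb => hcomm k j le_rfl hj hjb
    have ih' := ih (fun i hi hib => hbraid i (by omega) hib)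
      (fun i j hi hij hjb => hcomm i j (by omega) hij hjb)
    rw [hY₁] at ih' ⊢
    rw [hY₀, hY₁]
    calc T k * (T (k + 1) * Y₂ * (T k * (T (k + 1) * Y₂)))
        = T k * T (k + 1) * T k * (Y₂ * (T (k + 1) * Y₂)) := by
          simp only [mul_assoc, hY₂.symm.left_comm]
      _ = T (k + 1) * T k * (T (k + 1) * (Y₂ * (T (k + 1) * Y₂))) := by
          rw [hbraid k le_rfl (by omega)]; simp only [mul_assoc]
      _ = T (k + 1) * Y₂ * (T k * (T (k + 1) * Y₂)) * T b := by
          rw [ih']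
          simp only [mul_assoc, hY₂.symm.left_comm]

end upProd

theorem mul_sq_of_four_braid {M : Type*} [Monoid M] {s t y u : M}
    (hst : t * s * t * s = s * t * s * t) (hsy : Commute s y)
    (hty : t * (y * (t * y)) = y * (t * y) * u) :
    t * (s * (t * y)) ^ 2 = (s * (t * y)) ^ 2 * u :=
  calc t * (s * (t * y)) ^ 2 = t * s * t * s * (y * (t * y)) := by
        simp only [sq, mul_assoc, hsy.symm.left_comm]
    _ = s * t * s * (t * (y * (t * y))) := by rw [hst]; simp only [mul_assoc]
    _ = (s * (t * y)) ^ 2 * u := by rw [hty]; simp only [sq, mul_assoc, hsy.symm.left_comm]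

/-- In the affine braid group of type `C⁽¹⁾`, the element `X = T_0 T_1 ⋯ T_n` satisfies
`X T_i = T_{i+1} X` for `1 ≤ i ≤ n-2`, and `T_1 X² = X² T_{n-1}`. -/
theorem X_shift_relations {G : Type*} [Group G] (n : ℕ) (hn : 2 ≤ n) (T : ℕ → G)
    (hbraid : ∀ i, 1 ≤ i → i ≤ n - 2 →
      T i * T (i + 1) * T i = T (i + 1) * T i * T (i + 1))
    (hcomm : ∀ i j, i ≤ n → j ≤ n → i + 2 ≤ j → T i * T j = T j * T i)
    (hC0 : T 1 * T 0 * T 1 * T 0 = T 0 * T 1 * T 0 * T 1)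
    (hCn : T (n - 1) * T n * T (n - 1) * T n = T n * T (n - 1) * T n * T (n - 1)) :
    (∀ i, 1 ≤ i → i ≤ n - 2 → upProd T 0 n * T i = T (i + 1) * upProd T 0 n) ∧
    T 1 * (upProd T 0 n) ^ 2 = (upProd T 0 n) ^ 2 * T (n - 1) := by
  obtain ⟨m, rfl⟩ := Nat.exists_eq_add_of_le' hn
  simp only [Nat.add_sub_cancel, show m + 2 - 1 = m + 1 by omega] at hbraid hCn ⊢
  have hfar : ∀ i j, i + 2 ≤ j → j ≤ m + 2 → Commute (T i) (T j) :=
    fun i j hij hj => hcomm i j (by omega) hj hij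
  refine ⟨fun i hi him => ?_, ?_⟩
  · exact upProd_mul_of_braid (Nat.zero_le i) (by omega) (hbraid i hi him)
      (fun k _ hki => (hfar k (i + 1) (by omega) (by omega)).symm)
      (hfar i)
  · have hY₁ : T 1 * (upProd T 2 (m + 2) * upProd T 1 (m + 2)) =
        upProd T 2 (m + 2) * upProd T 1 (m + 2) * T (m + 1) :=
      mul_upProd_succ_mul_upProd_of_braid (by omega)
        (fun i hi him => hbraid i hi (by omega))
        (fun i j _ => hfar i j) hCn
    have hY : upProd T 1 (m + 2) = T 1 * upProd T 2 (m + 2) := upProd_eq_mul T (by omega)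
    rw [hY] at hY₁
    rw [upProd_eq_mul T (Nat.zero_le _), hY]
    exact mul_sq_of_four_braid hC0 (Commute.upProd_right (hfar 0))
      (by simpa only [mul_assoc] using hY₁)
end

section
/- The elements J̄'_k := (T'_{k-1} T'_{k-2} ⋯ T'_1) · X̄ · (T'^{-1}_{n-1} T'^{-1}_{n-2} ⋯ T'^{-1}_k) for k = 1, …, n (so J̄'_1 = X̄ T'^{-1}_{n-1} ⋯ T'^{-1}_1 and J̄'_n = T'_{n-1} ⋯ T'_1 X̄) pairwise commute: J̄'_k J̄'_r = J̄'_r J̄'_k for all 1 ≤ k, r ≤ n. -/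
/-- The ordered product `T b * T (b-1) * ⋯ * T a` (equal to `1` when `b < a`). -/
def downProd {G : Type*} [Monoid G] (T : ℕ → G) (b a : ℕ) : G :=
  ((List.range (b + 1 - a)).map fun k => T (b - k)).prod

/-!
One has `J̄'_{k+1} = T'_k J̄'_k T'_k`, and `T'_i` commutes with `J̄'_k` whenever `k < i`: the
braid relations slide `T'_i` through the decreasing products (lowering its index by one), and
conjugation by `X̄` raises it back. So by induction it suffices that consecutive elements
`J̄'_k, J̄'_{k+1}` commute. Using the braid identity
`(T_b ⋯ T_a)(T_b ⋯ T_{a+1}) = (T_{b-1} ⋯ T_a)(T_b ⋯ T_a)`, for the `T'_i` and for their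
inverses, both `J̄'_k J̄'_{k+1}` and `J̄'_{k+1} J̄'_k` are brought to the shape
`(T'_{k-1} ⋯ T'_1)(T'_k ⋯ T'_2) X̄² (⋯)`, and they then differ only by moving `T'_1` across
`X̄²`, which is the relation `T'_1 X̄² = X̄² T'_{n-1}`.
-/

section DownProd

variable {M : Type*} [Monoid M] (T : ℕ → M)

theorem downProd_of_lt {b a : ℕ} (h : b < a) : downProd T b a = 1 := by
  simp [downProd, Nat.sub_eq_zero_of_le h]

theorem downProd_succ {b a : ℕ} (h : a ≤ b + 1) :
    downProd T (b + 1) a = T (b + 1) * downProd T b a := by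
  unfold downProd
  rw [show b + 1 + 1 - a = b + 1 - a + 1 by omega, List.range_succ_eq_map]
  simp [Function.comp_def]

theorem downProd_eq_downProd_mul {b a : ℕ} (h : a ≤ b) :
    downProd T b a = downProd T b (a + 1) * T a := by
  unfold downProd
  rw [show b + 1 - a = b + 1 - (a + 1) + 1 by omega, List.range_succ]
  simp [Nat.sub_sub_self h]

theorem downProd_add_one (b a : ℕ) :
    downProd T (b + 1) (a + 1) = downProd (fun i => T (i + 1)) b a := by
  unfold downProd
  rw [Nat.add_sub_add_right]
  refine congrArg List.prod (List.map_congr_left fun k hk => ?_)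
  rw [List.mem_range] at hk
  rw [show b + 1 - k = b - k + 1 by omega]

theorem semiconjBy_downProd {x : M} {U : ℕ → M} {b a : ℕ}
    (h : ∀ i, a ≤ i → i ≤ b → SemiconjBy x (T i) (U i)) :
    SemiconjBy x (downProd T b a) (downProd U b a) := by
  induction b with
  | zero =>
    rcases Nat.eq_zero_or_pos a with rfl | ha
    · simpa [downProd] using h 0 le_rfl le_rfl
    · simp only [downProd_of_lt _ ha, SemiconjBy.one_right]
  | succ b ih =>
    rcases le_or_gt a (b + 1) with ha | ha
    · rw [downProd_succ T ha, downProd_succ U ha]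
      exact (h _ ha le_rfl).mul_right (ih fun i hai hib => h i hai (by omega))
    · simp only [downProd_of_lt _ ha, SemiconjBy.one_right]

theorem commute_downProd {x : M} {b a : ℕ} (h : ∀ i, a ≤ i → i ≤ b → Commute x (T i)) :
    Commute x (downProd T b a) :=
  semiconjBy_downProd T h

end DownProd

structure SatisfiesBraidRelations {M : Type*} [Monoid M] (T : ℕ → M) (a b : ℕ) : Prop where
  braid : ∀ i, a ≤ i → i + 1 ≤ b → T i * T (i + 1) * T i = T (i + 1) * T i * T (i + 1)
  commute : ∀ i j, a ≤ i → j ≤ b → i + 2 ≤ j → Commute (T i) (T j)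

namespace SatisfiesBraidRelations

variable {M : Type*} [Monoid M] {T : ℕ → M} {a b : ℕ}

theorem mono (h : SatisfiesBraidRelations T a b) {a' b' : ℕ} (ha : a ≤ a') (hb : b' ≤ b) :
    SatisfiesBraidRelations T a' b' :=
  ⟨fun i hi hib => h.braid i (ha.trans hi) (hib.trans hb),
    fun i j hi hjb hij => h.commute i j (ha.trans hi) (hjb.trans hb) hij⟩

theorem inv {G : Type*} [Group G] {T : ℕ → G} (h : SatisfiesBraidRelations T a b) :
    SatisfiesBraidRelations (fun i => (T i)⁻¹) a b where
  braid i hi hib := by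
    simpa only [mul_inv_rev, mul_assoc] using congrArg (·⁻¹) (h.braid i hi hib)
  commute i j hi hjb hij := (h.commute i j hi hjb hij).inv_inv

theorem semiconjBy_downProd_succ (h : SatisfiesBraidRelations T a b) {j : ℕ} (hj : a ≤ j)
    (hjb : j + 1 ≤ b) : SemiconjBy (downProd T b a) (T (j + 1)) (T j) := by
  induction hj using Nat.decreasingInduction with
  | self =>
    have hfar : Commute (downProd T b (j + 2)) (T j) :=
      (commute_downProd T fun i hi hib => h.commute j i le_rfl hib hi).symm
    have hbraid : SemiconjBy (T (j + 1) * T j) (T (j + 1)) (T j) := by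
      simpa only [SemiconjBy, mul_assoc] using (h.braid j le_rfl hjb).symm
    rw [downProd_eq_downProd_mul T (by omega), downProd_eq_downProd_mul T hjb, mul_assoc]
    exact SemiconjBy.mul_left hfar hbraid
  | of_succ a ha ih =>
    rw [downProd_eq_downProd_mul T (by omega)]
    exact (ih (h.mono a.le_succ le_rfl)).mul_left
      (h.commute a (j + 1) le_rfl (by omega) (by omega))

theorem semiconjBy_downProd_downProd {c : ℕ} (h : SatisfiesBraidRelations T a (c + 1)) :
    SemiconjBy (downProd T (c + 1) a) (downProd T (c + 1) (a + 1)) (downProd T c a) := by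
  rw [downProd_add_one]
  exact semiconjBy_downProd _ fun i hi hic => h.semiconjBy_downProd_succ hi (by omega)

end SatisfiesBraidRelations

section Jbar

variable {G : Type*} [Group G] (T : ℕ → G) (X : G) (n : ℕ)

def jbar' (k : ℕ) : G :=
  downProd T (k - 1) 1 * X * downProd (fun m => (T m)⁻¹) (n - 1) k

theorem jbar'_succ {k : ℕ} (hk : 1 ≤ k) (hkn : k ≤ n - 1) :
    jbar' T X n (k + 1) = T k * jbar' T X n k * T k := by
  obtain ⟨k, rfl⟩ := Nat.exists_eq_add_of_le' hk
  simp only [jbar', Nat.add_sub_cancel, downProd_succ T (Nat.le_add_left 1 k),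
    downProd_eq_downProd_mul _ hkn, mul_assoc, inv_mul_cancel, mul_one]

variable {T X n}

theorem commute_jbar'_T_of_lt (hT : SatisfiesBraidRelations T 1 (n - 1))
    (hX : ∀ i, 1 ≤ i → i ≤ n - 2 → SemiconjBy X (T i) (T (i + 1)))
    {k i : ℕ} (hk : 1 ≤ k) (hki : k < i) (hin : i ≤ n - 1) :
    Commute (jbar' T X n k) (T i) := by
  obtain ⟨j, rfl⟩ : ∃ j, i = j + 1 := ⟨i - 1, by omega⟩
  have hA : Commute (downProd T (k - 1) 1) (T (j + 1)) :=
    (commute_downProd T fun l hl hlk => (hT.commute l (j + 1) hl hin (by omega)).symm).symm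
  have hV : SemiconjBy (downProd (fun m => (T m)⁻¹) (n - 1) k) (T (j + 1)) (T j) := by
    simpa only [inv_inv] using
      ((hT.inv.mono hk le_rfl).semiconjBy_downProd_succ (by omega) hin).inv_right
  exact (SemiconjBy.mul_left hA (hX j (by omega) (by omega))).mul_left hV

theorem commute_jbar'_jbar'_succ (hT : SatisfiesBraidRelations T 1 (n - 1))
    (hX : ∀ i, 1 ≤ i → i ≤ n - 2 → SemiconjBy X (T i) (T (i + 1)))
    (hX2 : T 1 * X ^ 2 = X ^ 2 * T (n - 1)) {k : ℕ} (hk : 1 ≤ k) (hkn : k + 1 ≤ n) :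
    Commute (jbar' T X n k) (jbar' T X n (k + 1)) := by
  obtain ⟨k, rfl⟩ := Nat.exists_eq_add_of_le' hk
  obtain ⟨m, rfl⟩ : ∃ m, n = m + 2 := ⟨n - 2, by omega⟩
  set S : ℕ → G := fun i => (T i)⁻¹
  set A := downProd T k 1
  set B := downProd T (k + 1) 1
  set U := downProd T (k + 1) 2
  set V := downProd S (m + 1) (k + 1)
  set V' := downProd S (m + 1) (k + 2)
  set W := downProd S m (k + 1)
  have hB : B = T (k + 1) * A := downProd_succ T (by omega)
  have hBU : B = U * T 1 := downProd_eq_downProd_mul T (by omega)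
  have hV : V = V' * (T (k + 1))⁻¹ := downProd_eq_downProd_mul S (by omega)
  have hVW : V = (T (m + 1))⁻¹ * W := downProd_succ S (by omega)
  have hAV' : Commute A V' := commute_downProd S fun j hj hjm =>
    (commute_downProd T fun i hi hik => (hT.commute i j hi hjm (by omega)).inv_right.symm).symm
  have hXA : X * A = U * X := by
    rw [show U = downProd (fun i => T (i + 1)) k 1 from downProd_add_one T k 1]
    exact semiconjBy_downProd T fun i hi hik => hX i hi (by omega)
  have hXW : X * W = V' * X := by
    rw [show V' = downProd (fun i => S (i + 1)) m (k + 1) from downProd_add_one S m (k + 1)]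
    exact semiconjBy_downProd S fun i hi him => (hX i (by omega) him).inv_right
  have hBraidT : B * U = A * B := (hT.mono le_rfl (by omega)).semiconjBy_downProd_downProd
  have hBraidS : V * V' = W * V := (hT.inv.mono (by omega) le_rfl).semiconjBy_downProd_downProd
  have hLeft : A * X * V * (B * X * V') = A * U * X ^ 2 * (W * V') :=
    calc A * X * V * (B * X * V') = A * X * (V' * A) * X * V' := by rw [hV, hB]; group
      _ = A * (X * A) * (V' * X) * V' := by rw [← hAV'.eq]; simp only [mul_assoc]
      _ = A * U * X ^ 2 * (W * V') := by rw [hXA, ← hXW]; simp only [mul_assoc, sq]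
  have hRight : B * X * V' * (A * X * V) = B * U * X ^ 2 * (W * V) :=
    calc B * X * V' * (A * X * V) = B * X * (V' * A) * X * V := by simp only [mul_assoc]
      _ = B * (X * A) * (V' * X) * V := by rw [← hAV'.eq]; simp only [mul_assoc]
      _ = B * U * X ^ 2 * (W * V) := by rw [hXA, ← hXW]; simp only [mul_assoc, sq]
  have hTail : W * V' = T (m + 1) * (W * V) := by
    rw [← hBraidS, hVW]; group
  change T 1 * X ^ 2 = X ^ 2 * T (m + 1) at hX2
  change A * X * V * (B * X * V') = B * X * V' * (A * X * V)
  calc A * X * V * (B * X * V') = A * U * (X ^ 2 * T (m + 1)) * (W * V) := by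
        rw [hLeft, hTail]; simp only [mul_assoc]
    _ = A * B * X ^ 2 * (W * V) := by rw [← hX2, hBU]; simp only [mul_assoc]
    _ = B * X * V' * (A * X * V) := by rw [← hBraidT, hRight]

theorem commute_jbar'_jbar'_of_lt (hT : SatisfiesBraidRelations T 1 (n - 1))
    (hX : ∀ i, 1 ≤ i → i ≤ n - 2 → SemiconjBy X (T i) (T (i + 1)))
    (hX2 : T 1 * X ^ 2 = X ^ 2 * T (n - 1)) {k r : ℕ} (hk : 1 ≤ k) (hkr : k < r) (hrn : r ≤ n) :
    Commute (jbar' T X n k) (jbar' T X n r) := by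
  induction r, hkr using Nat.le_induction with
  | base => exact commute_jbar'_jbar'_succ hT hX hX2 hk hrn
  | succ r hkr ih =>
    have hTr : Commute (jbar' T X n k) (T r) := commute_jbar'_T_of_lt hT hX hk hkr (by omega)
    rw [jbar'_succ T X n (by omega) (by omega)]
    exact (hTr.mul_right (ih (by omega))).mul_right hTr

end Jbar

theorem Jbar_prime_commute_general {G : Type*} [Group G] (n : ℕ) (T' : ℕ → G) (X : G)
    (hbraid : ∀ i, 1 ≤ i → i ≤ n - 2 →
      T' i * T' (i + 1) * T' i = T' (i + 1) * T' i * T' (i + 1))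
    (hcomm : ∀ i j, 1 ≤ i → j ≤ n - 1 → i + 2 ≤ j → T' i * T' j = T' j * T' i)
    (hX : ∀ i, 1 ≤ i → i ≤ n - 2 → X * T' i = T' (i + 1) * X)
    (hX2 : T' 1 * X ^ 2 = X ^ 2 * T' (n - 1)) :
    ∀ k r, 1 ≤ k → k ≤ n → 1 ≤ r → r ≤ n →
      (downProd T' (k - 1) 1 * X * downProd (fun m => (T' m)⁻¹) (n - 1) k) *
        (downProd T' (r - 1) 1 * X * downProd (fun m => (T' m)⁻¹) (n - 1) r) =
      (downProd T' (r - 1) 1 * X * downProd (fun m => (T' m)⁻¹) (n - 1) r) *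
        (downProd T' (k - 1) 1 * X * downProd (fun m => (T' m)⁻¹) (n - 1) k) := by
  intro k r hk hkn hr hrn
  have hT : SatisfiesBraidRelations T' 1 (n - 1) :=
    ⟨fun i hi hin => hbraid i hi (by omega), hcomm⟩
  rcases lt_trichotomy k r with hkr | rfl | hrk
  · exact commute_jbar'_jbar'_of_lt hT hX hX2 hk hkr hrn
  · rfl
  · exact (commute_jbar'_jbar'_of_lt hT hX hX2 hr hrk hkn).symm

/-- In the extended periodic `A`-type braid group `B̄_n(A⁽¹⁾)`, the elements
`J̄'_k = (T'_{k-1} ⋯ T'_1) X̄ (T'_{n-1}⁻¹ ⋯ T'_k⁻¹)` pairwise commute. -/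
theorem Jbar_prime_commute {G : Type*} [Group G] (n : ℕ) (hn : 3 ≤ n) (T' : ℕ → G) (X : G)
    (hbraid : ∀ i, 1 ≤ i → i ≤ n - 2 →
      T' i * T' (i + 1) * T' i = T' (i + 1) * T' i * T' (i + 1))
    (hcomm : ∀ i j, 1 ≤ i → j ≤ n - 1 → i + 2 ≤ j → T' i * T' j = T' j * T' i)
    (hX : ∀ i, 1 ≤ i → i ≤ n - 2 → X * T' i = T' (i + 1) * X)
    (hX2 : T' 1 * X ^ 2 = X ^ 2 * T' (n - 1)) :
    ∀ k r, 1 ≤ k → k ≤ n → 1 ≤ r → r ≤ n →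
      (downProd T' (k - 1) 1 * X * downProd (fun m => (T' m)⁻¹) (n - 1) k) *
        (downProd T' (r - 1) 1 * X * downProd (fun m => (T' m)⁻¹) (n - 1) r) =
      (downProd T' (r - 1) 1 * X * downProd (fun m => (T' m)⁻¹) (n - 1) r) *
        (downProd T' (k - 1) 1 * X * downProd (fun m => (T' m)⁻¹) (n - 1) k) :=
  Jbar_prime_commute_general n T' X hbraid hcomm hX hX2
end
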